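/- Functional equation for iterated primitives of the tube function: for a bounded set A ⊆ ℝ^N, every m ∈ ℕ, δ > 0 and s ∈ ℂ with Re s > upper box dimension of A, the tube zeta function ζ̃_A(s) = ∫₀^δ t^{s-N-1} V_A(t) dt satisfies ζ̃_A(s) = ∑_{n=1}^{m} (N-s+1)_{n-1} δ^{s-N-n} V_A^[n](δ) + (N-s+1)_m ∫₀^δ t^{s-N-1-m} V_A^[m](t) dt, where (x)_m = x(x+1)⋯(x+m-1) is the rising factorial with (x)₀ = 1. -/

import Mathlib

/-!
Since `V^[n+1](t) = ∫₀ᵗ V^[n]`, Fubini on the triangle `0 < u ≤ t ≤ δ` gives the integration by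
parts `∫₀^δ t^b V^[n] = δ^b V^[n+1](δ) - b ∫₀^δ t^(b-1) V^[n+1]`; applying it `m` times with
`b = s - N - 1, s - N - 2, …` produces the rising factorials. All `V^[n]` are monotone and
nonnegative, so `V^[n+1](t) ≤ t V^[n](t)` and each new integrand is integrable as soon as the
previous one is. The first one, `t^(s-N-1) V_A(t)`, is integrable because `Re s > dim̄_B A`
gives `V_A(t) ≤ t^(N-σ)` near `0` for some `σ < Re s`.
-/

open MeasureTheory Filter Set Finset

/-- The tube function `V_A(t) = |A_t|`: the Lebesgue measure of the `t`-neighborhood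
of `A ⊆ ℝ^N`. -/
noncomputable def tubeVol {N : ℕ} (A : Set (EuclideanSpace ℝ (Fin N))) (t : ℝ) : ℝ :=
  (volume (Metric.thickening t A)).toReal

/-- The `m`-fold iterated primitive (vanishing to order `m` at `0`) of `F`. -/
noncomputable def iterPrim (F : ℝ → ℝ) : ℕ → ℝ → ℝ
  | 0, t => F t
  | (m + 1), t => ∫ u in Set.Ioc (0 : ℝ) t, iterPrim F m u

/-- The upper Minkowski (box) dimension of `A ⊆ ℝ^N`, defined as
`limsup_{t→0⁺} (N - log V_A(t)/log t)`. -/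
noncomputable def ubDim {N : ℕ} (A : Set (EuclideanSpace ℝ (Fin N))) : ℝ :=
  Filter.limsup (fun t : ℝ => (N : ℝ) - Real.log (tubeVol A t) / Real.log t)
    (nhdsWithin 0 (Set.Ioi 0))

/-- The rising factorial (Pochhammer symbol) `(x)_m = x(x+1)⋯(x+m-1)`, with `(x)₀ = 1`. -/
noncomputable def risingFact (x : ℂ) (m : ℕ) : ℂ := ∏ i ∈ Finset.range m, (x + i)

open scoped Topology

theorem setIntegral_Ioc_indicator_Iic {E : Type*} [NormedAddCommGroup E] [NormedSpace ℝ E]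
    {φ : ℝ → E} {t δ : ℝ} (ht : t ≤ δ) :
    ∫ u in Ioc 0 δ, (Iic t).indicator φ u = ∫ u in Ioc 0 t, φ u := by
  rw [setIntegral_indicator measurableSet_Iic, Ioc_inter_Iic, min_eq_right ht]

theorem integral_Ioc_mul_integral_Ioc_swap {f g : ℝ → ℂ} {δ : ℝ}
    (hf : Measurable f) (hg : Measurable g) (hgi : IntegrableOn g (Ioc 0 δ))
    (hfg : IntegrableOn (fun t => ‖f t‖ * ∫ u in Ioc 0 t, ‖g u‖) (Ioc 0 δ)) :
    ∫ t in Ioc 0 δ, f t * ∫ u in Ioc 0 t, g u =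
      ∫ u in Ioc 0 δ, (∫ t in Ioc u δ, f t) * g u := by
  set K : ℝ × ℝ → ℂ := {p | p.2 ≤ p.1}.indicator fun p => f p.1 * g p.2
  have hK_slice_left (t u : ℝ) : K (t, u) = (Iic t).indicator (fun u => f t * g u) u := by
    simp only [K, indicator_apply, mem_ofPred_eq, Set.mem_Iic]
  have hK_slice_right (t u : ℝ) : K (t, u) = (Ici u).indicator (fun t => f t * g u) t := by
    simp only [K, indicator_apply, mem_ofPred_eq, Set.mem_Ici]
  have hK_meas : Measurable K :=
    ((hf.comp measurable_fst).mul (hg.comp measurable_snd)).indicator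
      (measurableSet_le measurable_snd measurable_fst)
  have hK_int : Integrable K ((volume.restrict (Ioc 0 δ)).prod (volume.restrict (Ioc 0 δ))) := by
    refine (integrable_prod_iff hK_meas.aestronglyMeasurable).2
      ⟨Eventually.of_forall fun t => ?_, hfg.congr_fun (fun t ht => ?_) measurableSet_Ioc⟩
    · simp only [hK_slice_left]
      exact (hgi.const_mul (f t)).indicator measurableSet_Iic
    · simp only [hK_slice_left, norm_indicator_eq_indicator_norm, norm_mul]
      rw [setIntegral_Ioc_indicator_Iic ht.2, integral_const_mul]
  calc ∫ t in Ioc 0 δ, f t * ∫ u in Ioc 0 t, g u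
      = ∫ t in Ioc 0 δ, ∫ u in Ioc 0 δ, K (t, u) := by
        refine setIntegral_congr_fun measurableSet_Ioc fun t ht => ?_
        simp only [hK_slice_left]
        rw [setIntegral_Ioc_indicator_Iic ht.2, integral_const_mul]
    _ = ∫ u in Ioc 0 δ, ∫ t in Ioc 0 δ, K (t, u) := integral_integral_swap hK_int
    _ = ∫ u in Ioc 0 δ, (∫ t in Ioc u δ, f t) * g u := by
        refine setIntegral_congr_fun measurableSet_Ioc fun u hu => ?_
        simp only [hK_slice_right]
        have hslice : Ioc 0 δ ∩ Ici u = Icc u δ := by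
          ext t
          simp only [mem_inter_iff, Set.mem_Ioc, Set.mem_Ici, Set.mem_Icc]
          exact ⟨fun h => ⟨h.2, h.1.2⟩, fun h => ⟨⟨hu.1.trans_le h.1, h.2⟩, h.1⟩⟩
        rw [setIntegral_indicator measurableSet_Ici, hslice, integral_Icc_eq_integral_Ioc,
          integral_mul_const]

theorem integral_Ioc_mul_cpow_sub_one (a : ℂ) {u δ : ℝ} (hu : 0 < u) (huδ : u ≤ δ) :
    ∫ t in Ioc u δ, a * (t : ℂ) ^ (a - 1) = (δ : ℂ) ^ a - (u : ℂ) ^ a := by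
  rcases eq_or_ne a 0 with rfl | ha
  · simp
  have h0 : (0 : ℝ) ∉ uIcc u δ := notMem_uIcc_of_lt hu (hu.trans_le huδ)
  rw [← intervalIntegral.integral_of_le huδ, intervalIntegral.integral_const_mul,
    integral_cpow (Or.inr ⟨by simpa [sub_eq_neg_self] using ha, h0⟩), sub_add_cancel,
    mul_div_cancel₀ _ ha]

section Primitive

variable {G : ℝ → ℝ}

theorem monotone_primitive (hG : Monotone G) (hG0 : ∀ t, 0 ≤ G t) :
    Monotone fun t => ∫ u in Ioc 0 t, G u := fun _ _ htt' =>
  setIntegral_mono_set hG.intervalIntegrable.1 (Eventually.of_forall fun u => hG0 u)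
    (Ioc_subset_Ioc_right htt').eventuallyLE

theorem primitive_le_mul (hG : Monotone G) {t : ℝ} (ht : 0 ≤ t) :
    ∫ u in Ioc 0 t, G u ≤ t * G t :=
  calc ∫ u in Ioc 0 t, G u ≤ ∫ _ in Ioc 0 t, G t :=
        setIntegral_mono_on hG.intervalIntegrable.1 (integrableOn_const measure_Ioc_lt_top.ne)
          measurableSet_Ioc fun _ hu => hG hu.2
    _ = t * G t := by simp [ht]

theorem integrableOn_cpow_sub_one_mul_primitive (hG : Monotone G) (hG0 : ∀ t, 0 ≤ G t)
    {a : ℂ} {δ : ℝ} (hint : IntegrableOn (fun t : ℝ => (t : ℂ) ^ a * G t) (Ioc 0 δ)) :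
    IntegrableOn (fun t : ℝ => (t : ℂ) ^ (a - 1) * ↑(∫ u in Ioc 0 t, G u)) (Ioc 0 δ) := by
  refine hint.norm.mono' ((Complex.measurable_ofReal.pow_const _).mul
    (Complex.measurable_ofReal.comp (monotone_primitive hG hG0).measurable)).aestronglyMeasurable ?_
  refine (ae_restrict_iff' measurableSet_Ioc).2 (Eventually.of_forall fun t ht => ?_)
  have hprim0 : 0 ≤ ∫ u in Ioc 0 t, G u := setIntegral_nonneg measurableSet_Ioc fun u _ => hG0 u
  rw [norm_mul, norm_mul, Complex.norm_real, Complex.norm_real, Real.norm_of_nonneg hprim0,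
    Real.norm_of_nonneg (hG0 t), Complex.norm_cpow_eq_rpow_re_of_pos ht.1,
    Complex.norm_cpow_eq_rpow_re_of_pos ht.1, Complex.sub_re, Complex.one_re,
    Real.rpow_sub_one ht.1.ne']
  calc t ^ a.re / t * ∫ u in Ioc 0 t, G u ≤ t ^ a.re / t * (t * G t) :=
        mul_le_mul_of_nonneg_left (primitive_le_mul hG ht.1.le)
          (div_nonneg (Real.rpow_nonneg ht.1.le _) ht.1.le)
    _ = t ^ a.re * G t := by rw [← mul_assoc, div_mul_cancel₀ _ ht.1.ne']

theorem integral_cpow_mul_eq_sub_primitive (hG : Monotone G) (hG0 : ∀ t, 0 ≤ G t)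
    {a : ℂ} {δ : ℝ} (hint : IntegrableOn (fun t : ℝ => (t : ℂ) ^ a * G t) (Ioc 0 δ)) :
    ∫ t in Ioc 0 δ, (t : ℂ) ^ a * G t =
      (δ : ℂ) ^ a * ↑(∫ u in Ioc 0 δ, G u) -
        a * ∫ t in Ioc 0 δ, (t : ℂ) ^ (a - 1) * ↑(∫ u in Ioc 0 t, G u) := by
  have hGint : IntegrableOn (fun u => (G u : ℂ)) (Ioc 0 δ) := hG.intervalIntegrable.1.ofReal
  have hdom : IntegrableOn (fun t : ℝ => ‖a * (t : ℂ) ^ (a - 1)‖ * ∫ u in Ioc 0 t, ‖(G u : ℂ)‖)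
      (Ioc 0 δ) := by
    refine IntegrableOn.congr_fun
      ((integrableOn_cpow_sub_one_mul_primitive hG hG0 hint).norm.const_mul ‖a‖)
      (fun t _ => ?_) measurableSet_Ioc
    simp only [norm_mul, Complex.norm_real, Real.norm_of_nonneg (hG0 _), mul_assoc,
      Real.norm_of_nonneg (setIntegral_nonneg measurableSet_Ioc fun u _ => hG0 u)]
  have hswap := integral_Ioc_mul_integral_Ioc_swap (g := fun u => (G u : ℂ))
    ((Complex.measurable_ofReal.pow_const _).const_mul a)
    (Complex.measurable_ofReal.comp hG.measurable) hGint hdom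
  have hleft : ∫ t in Ioc 0 δ, a * (t : ℂ) ^ (a - 1) * ∫ u in Ioc 0 t, (G u : ℂ) =
      a * ∫ t in Ioc 0 δ, (t : ℂ) ^ (a - 1) * ↑(∫ u in Ioc 0 t, G u) := by
    simp only [integral_complex_ofReal, mul_assoc, integral_const_mul]
  have hright : ∫ u in Ioc 0 δ, (∫ t in Ioc u δ, a * (t : ℂ) ^ (a - 1)) * G u =
      (δ : ℂ) ^ a * ↑(∫ u in Ioc 0 δ, G u) - ∫ t in Ioc 0 δ, (t : ℂ) ^ a * G t := by
    rw [setIntegral_congr_fun measurableSet_Ioc fun u hu => by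
      rw [integral_Ioc_mul_cpow_sub_one a hu.1 hu.2, sub_mul]]
    rw [integral_sub (hGint.const_mul _) hint, integral_const_mul, integral_complex_ofReal]
  rw [hleft, hright] at hswap
  linear_combination hswap

end Primitive

theorem risingFact_succ (x : ℂ) (m : ℕ) : risingFact x (m + 1) = risingFact x m * (x + m) :=
  prod_range_succ _ _

section IterPrim

variable {F : ℝ → ℝ}

theorem iterPrim_nonneg (hF0 : ∀ t, 0 ≤ F t) : ∀ m t, 0 ≤ iterPrim F m t
  | 0, t => hF0 t
  | m + 1, _ => setIntegral_nonneg measurableSet_Ioc fun u _ => iterPrim_nonneg hF0 m u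

theorem iterPrim_monotone (hF : Monotone F) (hF0 : ∀ t, 0 ≤ F t) :
    ∀ m, Monotone (iterPrim F m)
  | 0 => hF
  | m + 1 => monotone_primitive (iterPrim_monotone hF hF0 m) (iterPrim_nonneg hF0 m)

theorem integrableOn_cpow_sub_mul_iterPrim (hF : Monotone F) (hF0 : ∀ t, 0 ≤ F t)
    {a : ℂ} {δ : ℝ} (hint : IntegrableOn (fun t : ℝ => (t : ℂ) ^ (a - 1) * F t) (Ioc 0 δ)) :
    ∀ m : ℕ, IntegrableOn (fun t : ℝ => (t : ℂ) ^ (a - 1 - m) * iterPrim F m t) (Ioc 0 δ)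
  | 0 => by simpa [iterPrim] using hint
  | m + 1 => by
    have := integrableOn_cpow_sub_one_mul_primitive (iterPrim_monotone hF hF0 m)
      (iterPrim_nonneg hF0 m) (integrableOn_cpow_sub_mul_iterPrim hF hF0 hint m)
    rw [Nat.cast_add_one, ← sub_sub]
    exact this

theorem integral_cpow_mul_iterPrim_eq (hF : Monotone F) (hF0 : ∀ t, 0 ≤ F t)
    {b : ℂ} {δ : ℝ} {m : ℕ}
    (hint : IntegrableOn (fun t : ℝ => (t : ℂ) ^ b * iterPrim F m t) (Ioc 0 δ)) :
    ∫ t in Ioc 0 δ, (t : ℂ) ^ b * iterPrim F m t =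
      (δ : ℂ) ^ b * iterPrim F (m + 1) δ -
        b * ∫ t in Ioc 0 δ, (t : ℂ) ^ (b - 1) * iterPrim F (m + 1) t :=
  integral_cpow_mul_eq_sub_primitive (iterPrim_monotone hF hF0 m) (iterPrim_nonneg hF0 m) hint

theorem integral_cpow_mul_eq_sum_iterPrim (hF : Monotone F) (hF0 : ∀ t, 0 ≤ F t)
    {a : ℂ} {δ : ℝ} (hint : IntegrableOn (fun t : ℝ => (t : ℂ) ^ (a - 1) * F t) (Ioc 0 δ))
    (m : ℕ) :
    ∫ t in Ioc 0 δ, (t : ℂ) ^ (a - 1) * F t =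
      (∑ n ∈ Icc 1 m, risingFact (1 - a) (n - 1) * (δ : ℂ) ^ (a - n) * iterPrim F n δ) +
        risingFact (1 - a) m * ∫ t in Ioc 0 δ, (t : ℂ) ^ (a - 1 - m) * iterPrim F m t := by
  induction m with
  | zero => simp [risingFact, iterPrim]
  | succ m ih =>
    rw [ih, integral_cpow_mul_iterPrim_eq hF hF0 (integrableOn_cpow_sub_mul_iterPrim hF hF0 hint m),
      sum_Icc_succ_top (by omega), risingFact_succ, Nat.add_sub_cancel, Nat.cast_add_one,
      show a - 1 - (m : ℂ) - 1 = a - 1 - ((m : ℂ) + 1) by ring,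
      show a - 1 - (m : ℂ) = a - ((m : ℂ) + 1) by ring]
    ring

theorem integrableOn_cpow_mul_of_eventually_le_rpow {F : ℝ → ℝ} (hF : Monotone F)
    (hF0 : ∀ t, 0 ≤ F t) {a : ℂ} {β : ℝ} (hβ : -1 < a.re + β)
    (hFβ : ∀ᶠ t in 𝓝[>] 0, F t ≤ t ^ β) (δ : ℝ) :
    IntegrableOn (fun t : ℝ => (t : ℂ) ^ a * F t) (Ioc 0 δ) := by
  obtain ⟨t₀, ht₀, hle⟩ := mem_nhdsGT_iff_exists_Ioc_subset.1 hFβ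
  have hmeas : Measurable fun t : ℝ => (t : ℂ) ^ a * F t :=
    (Complex.measurable_ofReal.pow_const a).mul (Complex.measurable_ofReal.comp hF.measurable)
  have hnear : IntegrableOn (fun t : ℝ => (t : ℂ) ^ a * F t) (Ioc 0 t₀) := by
    refine Integrable.mono' (intervalIntegral.intervalIntegrable_rpow' hβ).1
      hmeas.aestronglyMeasurable ?_
    refine (ae_restrict_iff' measurableSet_Ioc).2 (Eventually.of_forall fun t ht => ?_)
    rw [norm_mul, Complex.norm_cpow_eq_rpow_re_of_pos ht.1, Complex.norm_real,
      Real.norm_of_nonneg (hF0 t), Real.rpow_add ht.1]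
    exact mul_le_mul_of_nonneg_left (hle ht) (Real.rpow_nonneg ht.1.le _)
  have hfar : IntegrableOn (fun t : ℝ => (t : ℂ) ^ a * F t) (Icc t₀ δ) :=
    IntegrableOn.continuousOn_mul
      (fun t ht => (Complex.continuousAt_ofReal_cpow_const t a
        (Or.inr (ht₀.trans_le ht.1).ne')).continuousWithinAt)
      ((hF.monotoneOn _).integrableOn_isCompact isCompact_Icc).ofReal isCompact_Icc
  refine (hnear.union hfar).mono_set fun t ht => ?_
  rcases le_or_gt t t₀ with h | h
  · exact Or.inl ⟨ht.1, h⟩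
  · exact Or.inr ⟨h.le, ht.2⟩

theorem eventually_neg_one_le_log_div_log {F : ℝ → ℝ} (hF : Monotone F) (hF0 : ∀ t, 0 ≤ F t) :
    ∀ᶠ t in 𝓝[>] 0, -1 ≤ Real.log (F t) / Real.log t := by
  filter_upwards [Ioo_mem_nhdsGT (Real.exp_pos (-F 1))] with t ht
  have ht1 : t < 1 := ht.2.trans_le (Real.exp_le_one_iff.2 (neg_nonpos.2 (hF0 1)))
  have hlog : Real.log t < -F 1 := (Real.log_lt_iff_lt_exp ht.1).2 ht.2
  rw [le_div_iff_of_neg (Real.log_neg ht.1 ht1)]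
  calc Real.log (F t) ≤ F t := Real.log_le_self (hF0 t)
    _ ≤ F 1 := hF ht1.le
    _ ≤ -1 * Real.log t := by linarith

section Tube

variable {N : ℕ} {A : Set (EuclideanSpace ℝ (Fin N))}

theorem tubeVol_nonneg (A : Set (EuclideanSpace ℝ (Fin N))) (t : ℝ) : 0 ≤ tubeVol A t :=
  ENNReal.toReal_nonneg

theorem Bornology.IsBounded.monotone_tubeVol (hA : Bornology.IsBounded A) :
    Monotone (tubeVol A) := fun _ _ h =>
  ENNReal.toReal_mono hA.thickening.measure_lt_top.ne (measure_mono (Metric.thickening_mono h A))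

theorem eventually_tubeVol_le_rpow (hA : Bornology.IsBounded A) {σ : ℝ} (hσ : ubDim A < σ) :
    ∀ᶠ t in 𝓝[>] 0, tubeVol A t ≤ t ^ ((N : ℝ) - σ) := by
  -- without an upper bound, `limsup` in `ubDim` would be a junk value
  have hbdd : IsBoundedUnder (· ≤ ·) (𝓝[>] 0)
      fun t => (N : ℝ) - Real.log (tubeVol A t) / Real.log t :=
    isBoundedUnder_of_eventually_le
      ((eventually_neg_one_le_log_div_log hA.monotone_tubeVol (tubeVol_nonneg A)).mono
        fun t ht => show _ ≤ (N : ℝ) + 1 by linarith)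
  filter_upwards [eventually_lt_of_limsup_lt hσ hbdd, Ioo_mem_nhdsGT one_pos] with t hlt ht
  rcases (tubeVol_nonneg A t).eq_or_lt with h0 | hpos
  · rw [← h0]
    exact Real.rpow_nonneg ht.1.le _
  · rw [Real.le_rpow_iff_log_le hpos ht.1, ← le_div_iff_of_neg (Real.log_neg ht.1 ht.2)]
    linarith

theorem integrableOn_tubeZeta_integrand (hA : Bornology.IsBounded A) {s : ℂ}
    (hs : ubDim A < s.re) (δ : ℝ) :
    IntegrableOn (fun t : ℝ => (t : ℂ) ^ (s - N - 1) * tubeVol A t) (Ioc 0 δ) := by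
  obtain ⟨σ, hσA, hσs⟩ := exists_between hs
  refine integrableOn_cpow_mul_of_eventually_le_rpow hA.monotone_tubeVol (tubeVol_nonneg A) ?_
    (eventually_tubeVol_le_rpow hA hσA) δ
  simp only [Complex.sub_re, Complex.natCast_re, Complex.one_re]
  linarith

end Tube

theorem tube_zeta_functional_equation_general {N : ℕ} (A : Set (EuclideanSpace ℝ (Fin N)))
    (hA : Bornology.IsBounded A) (m : ℕ) (δ : ℝ)
    (s : ℂ) (hs : ubDim A < s.re) :
    (∫ t in Set.Ioc (0 : ℝ) δ, (t : ℂ) ^ (s - N - 1) * ((tubeVol A t : ℝ) : ℂ)) =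
      (∑ n ∈ Finset.Icc 1 m,
        risingFact ((N : ℂ) - s + 1) (n - 1) * (δ : ℂ) ^ (s - N - n) *
          ((iterPrim (tubeVol A) n δ : ℝ) : ℂ)) +
      risingFact ((N : ℂ) - s + 1) m *
        ∫ t in Set.Ioc (0 : ℝ) δ,
          (t : ℂ) ^ (s - N - 1 - m) * ((iterPrim (tubeVol A) m t : ℝ) : ℂ) := by
  have h := integral_cpow_mul_eq_sum_iterPrim hA.monotone_tubeVol (tubeVol_nonneg A)
    (integrableOn_tubeZeta_integrand hA hs δ) m
  rwa [show 1 - (s - N) = (N : ℂ) - s + 1 by ring] at h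

/-- Functional equation for iterated primitives of the tube function: for a bounded
`A ⊆ ℝ^N`, every `m ≥ 1`, `δ > 0` and `s` with `Re s > dim̄_B A`,
`ζ̃_A(s) = ∑_{n=1}^m (N-s+1)_{n-1} δ^{s-N-n} V_A^[n](δ)
          + (N-s+1)_m ∫₀^δ t^{s-N-1-m} V_A^[m](t) dt`. -/
theorem tube_zeta_functional_equation {N : ℕ} (A : Set (EuclideanSpace ℝ (Fin N)))
    (hA : Bornology.IsBounded A) (m : ℕ) (hm : 1 ≤ m) (δ : ℝ) (hδ : 0 < δ)
    (s : ℂ) (hs : ubDim A < s.re) :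
    (∫ t in Set.Ioc (0 : ℝ) δ, (t : ℂ) ^ (s - N - 1) * ((tubeVol A t : ℝ) : ℂ)) =
      (∑ n ∈ Finset.Icc 1 m,
        risingFact ((N : ℂ) - s + 1) (n - 1) * (δ : ℂ) ^ (s - N - n) *
          ((iterPrim (tubeVol A) n δ : ℝ) : ℂ)) +
      risingFact ((N : ℂ) - s + 1) m *
        ∫ t in Set.Ioc (0 : ℝ) δ,
          (t : ℂ) ^ (s - N - 1 - m) * ((iterPrim (tubeVol A) m t : ℝ) : ℂ) :=
  tube_zeta_functional_equation_general A hA m δ s hs
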